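/- arXiv:1909.03300 — 3 statements merged into one kernel-verified Lean document; each statement's English description precedes it below -/
import Mathlib

section
/- For every n ≥ 2, an n-cycle ν ∈ S_n has degree 1 if and only if ν is a power of the rotation ρ = (1 2 ... n); equivalently, ν = ρ^m for some 1 ≤ m < n with gcd(m,n) = 1. -/
/-- The rotation `ρ = (1 2 ⋯ n)`, i.e. the permutation `i ↦ i + 1` of `ℤ/nℤ`. -/
def rho (n : ℕ) [NeZero n] : Equiv.Perm (ZMod n) := Equiv.addRight 1

/-- The (cyclic) degree of a permutation of `ℤ/nℤ`: the number of indices `i` (mod `n`)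
with `ν(i) > ν(i+1)`, values compared via the natural order on `{0, …, n-1}`. -/
def deg {n : ℕ} [NeZero n] (ν : Equiv.Perm (ZMod n)) : ℕ :=
  (Finset.univ.filter fun i : ZMod n => (ν (i + 1)).val < (ν i).val).card

/-- `ν` is an `n`-cycle: a single cycle moving all the points. -/
def IsNCycle {n : ℕ} [NeZero n] (ν : Equiv.Perm (ZMod n)) : Prop :=
  ν.IsCycle ∧ ν.support = Finset.univ

lemma rho_pow_apply (n : ℕ) [NeZero n] (m : ℕ) (i : ZMod n) :
    ((rho n) ^ m) i = i + m := by
  induction m with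
  | zero => simp
  | succ k ih =>
    rw [pow_succ']
    simp only [Equiv.Perm.mul_apply, rho, Equiv.coe_addRight] at *
    rw [ih]
    push_cast
    ring

lemma val_succ_lt_iff {n : ℕ} [NeZero n] (hn : 2 ≤ n) (x : ZMod n) :
    (x + 1).val < x.val ↔ x + 1 = 0 := by
  constructor
  · intro h
    by_contra hne
    have h1 : (1 : ZMod n).val = 1 := by
      rw [ZMod.val_one_eq_one_mod]; exact Nat.mod_eq_of_lt (by omega)
    have : (x + 1).val = x.val + 1 := by
      rcases Nat.lt_or_ge (x.val + 1) n with hlt | hge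
      · have hadd : x.val + (1 : ZMod n).val < n := by rw [h1]; omega
        rw [ZMod.val_add_of_lt hadd, h1]
      · exfalso
        have hx : x.val < n := ZMod.val_lt x
        have hxv : x.val = n - 1 := by omega
        apply hne
        have hx2 : x = ((n - 1 : ℕ) : ZMod n) := by
          rw [← hxv, ZMod.natCast_val, ZMod.cast_id]
        have hc1 : ((n - 1 : ℕ) : ZMod n) + 1 = (((n - 1) + 1 : ℕ) : ZMod n) := by
          rw [Nat.cast_add, Nat.cast_one]
        rw [hx2, hc1, Nat.sub_add_cancel (by omega), ZMod.natCast_self]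
    omega
  · intro h
    rw [h]
    have h1 : (1 : ZMod n).val = 1 := by
      rw [ZMod.val_one_eq_one_mod]; exact Nat.mod_eq_of_lt (by omega)
    have hx : x ≠ 0 := by
      intro h0; rw [h0, zero_add] at h
      have := congrArg ZMod.val h
      rw [h1, ZMod.val_zero] at this
      omega
    have hxv : x.val ≠ 0 := fun h0 => hx ((ZMod.val_eq_zero x).mp h0)
    simp only [ZMod.val_zero]
    omega

lemma diff_val_eq {n : ℕ} [NeZero n] (a b : ZMod n) :
    ((a - b).val : ℤ) = (a.val : ℤ) - b.val + (if a.val < b.val then (n : ℤ) else 0) := by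
  rcases Nat.lt_or_ge a.val b.val with h | h
  · rw [if_pos h]
    have hba : b - a ≠ 0 := by
      intro h0; rw [sub_eq_zero] at h0; subst h0; exact lt_irrefl _ h
    have : NeZero (b - a) := ⟨hba⟩
    have h2 : (b - a).val = b.val - a.val := ZMod.val_sub h.le
    have h3 : a - b = -(b - a) := by ring
    rw [h3, ZMod.val_neg_of_ne_zero, h2]
    have hb := ZMod.val_lt b
    push_cast [Nat.cast_sub h.le, Nat.cast_sub (by omega : b.val - a.val ≤ n)]
    ring
  · rw [if_neg (by omega), ZMod.val_sub h]
    push_cast [Nat.cast_sub h]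
    ring

lemma sum_diff_val {n : ℕ} [NeZero n] (ν : Equiv.Perm (ZMod n)) :
    ∑ i : ZMod n, ((ν (i + 1) - ν i).val : ℤ) = n * deg ν := by
  have h1 : ∑ i : ZMod n, ((ν (i + 1)).val : ℤ) = ∑ i : ZMod n, ((ν i).val : ℤ) :=
    Fintype.sum_equiv (Equiv.addRight 1) _ _ (fun i => rfl)
  calc ∑ i : ZMod n, ((ν (i + 1) - ν i).val : ℤ)
      = ∑ i : ZMod n, (((ν (i+1)).val : ℤ) - (ν i).val
          + (if (ν (i+1)).val < (ν i).val then (n : ℤ) else 0)) := by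
        refine Finset.sum_congr rfl fun i _ => ?_
        exact diff_val_eq _ _
    _ = ∑ i : ZMod n, (if (ν (i+1)).val < (ν i).val then (n : ℤ) else 0) := by
        rw [Finset.sum_add_distrib, Finset.sum_sub_distrib, h1]
        ring
    _ = n * deg ν := by
        rw [Finset.sum_ite, Finset.sum_const, Finset.sum_const]
        simp [deg, mul_comm]

theorem stmt_8 (n : ℕ) [NeZero n] (hn : 2 ≤ n) (ν : Equiv.Perm (ZMod n))
    (hν : IsNCycle ν) :
    deg ν = 1 ↔ ∃ m : ℕ, 1 ≤ m ∧ m < n ∧ Nat.gcd m n = 1 ∧ ν = (rho n) ^ m := by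
  have h1v : (1 : ZMod n).val = 1 := by
    rw [ZMod.val_one_eq_one_mod]; exact Nat.mod_eq_of_lt (by omega)
  have hone : (1 : ZMod n) ≠ 0 := by
    intro h
    have := congrArg ZMod.val h
    rw [h1v, ZMod.val_zero] at this
    omega
  constructor
  · intro hdeg
    -- each consecutive difference is 1
    have hstep : ∀ i : ZMod n, ν (i + 1) = ν i + 1 := by
      have hsum : ∑ i : ZMod n, ((ν (i + 1) - ν i).val : ℤ) = n := by
        rw [sum_diff_val, hdeg]; ring
      have hpos : ∀ i : ZMod n, 1 ≤ ((ν (i + 1) - ν i).val : ℤ) := by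
        intro i
        have hne : ν (i + 1) - ν i ≠ 0 := by
          rw [sub_ne_zero]
          intro h
          exact hone (by simpa using ν.injective h)
        have := (ZMod.val_eq_zero (ν (i+1) - ν i)).not.mpr hne
        omega
      have hcard : (Finset.univ : Finset (ZMod n)).card = n := by
        simp [ZMod.card]
      have hall : ∀ i : ZMod n, ((ν (i + 1) - ν i).val : ℤ) = 1 := by
        by_contra hc
        push_neg at hc
        obtain ⟨i0, hi0⟩ := hc
        have h2 : 2 ≤ ((ν (i0 + 1) - ν i0).val : ℤ) := by
          have := hpos i0; omega
        have hlt : ∑ _i : ZMod n, (1 : ℤ) < ∑ i : ZMod n, ((ν (i + 1) - ν i).val : ℤ) := by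
          apply Finset.sum_lt_sum (fun i _ => hpos i) ⟨i0, Finset.mem_univ _, by omega⟩
        rw [Finset.sum_const, hcard, nsmul_eq_mul, mul_one, hsum] at hlt
        omega
      intro i
      have := hall i
      have hval : (ν (i + 1) - ν i).val = 1 := by exact_mod_cast this
      have : ν (i + 1) - ν i = 1 := by
        have := ZMod.natCast_val (R := ZMod n) (ν (i+1) - ν i)
        rw [hval] at this
        simpa [ZMod.cast_id] using this.symm
      linear_combination this
    -- hence ν i = i + ν 0
    have hlin : ∀ i : ZMod n, ν i = i + ν 0 := by
      have hk : ∀ k : ℕ, ν (k : ZMod n) = (k : ZMod n) + ν 0 := by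
        intro k
        induction k with
        | zero => simp
        | succ j ih =>
          push_cast
          rw [hstep, ih]; ring
      intro i
      have : i = ((i.val : ℕ) : ZMod n) := by rw [ZMod.natCast_val, ZMod.cast_id]
      rw [this, hk]
    set c : ZMod n := ν 0 with hc
    have hcne : c ≠ 0 := by
      intro h0
      have : ν = 1 := by
        ext i
        rw [hlin i, h0, add_zero]; rfl
      exact hν.1.ne_one this
    refine ⟨c.val, ?_, ZMod.val_lt c, ?_, ?_⟩
    · have := (ZMod.val_eq_zero c).not.mpr hcne; omega
    · -- gcd from order
      have hνeq : ν = (rho n) ^ c.val := by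
        ext i
        rw [rho_pow_apply, hlin, ZMod.natCast_val, ZMod.cast_id]
      have hordρ : orderOf (rho n) = n := by
        rw [orderOf_eq_iff (by omega)]
        constructor
        · ext i
          rw [rho_pow_apply]
          simp [ZMod.natCast_self]
        · intro m hm hm0 hpow
          have hmz := congrArg (fun σ : Equiv.Perm (ZMod n) => σ 0) hpow
          simp only [rho_pow_apply, zero_add, Equiv.Perm.one_apply] at hmz
          have hdvd : n ∣ m := (ZMod.natCast_eq_zero_iff m n).mp hmz
          exact absurd (Nat.le_of_dvd hm0 hdvd) (by omega)
      have hordν : orderOf ν = n := by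
        rw [hν.1.orderOf, hν.2]
        simp [ZMod.card]
      rw [hνeq, orderOf_pow, hordρ] at hordν
      have hg : Nat.gcd n c.val ∣ n := Nat.gcd_dvd_left _ _
      have hdiv : Nat.gcd n c.val * (n / Nat.gcd n c.val) = n := Nat.mul_div_cancel' hg
      rw [hordν] at hdiv
      have hgone : Nat.gcd n c.val = 1 :=
        Nat.eq_of_mul_eq_mul_right (by omega : 0 < n) (by rw [hdiv, one_mul])
      rw [Nat.gcd_comm]
      exact hgone
    · ext i
      rw [rho_pow_apply, hlin, ZMod.natCast_val, ZMod.cast_id]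
  · rintro ⟨m, hm1, hmn, hgcd, rfl⟩
    -- deg (rho n ^ m) = 1
    unfold deg
    have hset : (Finset.univ.filter fun i : ZMod n =>
        (((rho n)^m) (i + 1)).val < (((rho n)^m) i).val) = {(-1 : ZMod n) - m} := by
      ext i
      simp only [Finset.mem_filter, Finset.mem_univ, true_and, Finset.mem_singleton,
        rho_pow_apply]
      have : i + 1 + (m : ZMod n) = (i + m) + 1 := by ring
      rw [this, val_succ_lt_iff hn]
      constructor
      · intro h
        have : i + m = -1 := by linear_combination h
        linear_combination this
      · intro h
        rw [h]; ring
    rw [hset, Finset.card_singleton]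
end

section
/- If n is prime, then the number of orbits of n-cycles in S_n under conjugation by the rotation subgroup equals ((n-1)! + (n-1)²)/n; in particular n divides (n-1)! + (n-1)², which implies Wilson's theorem (n-1)! ≡ -1 (mod n). -/
/-- The orbit of `ν` under conjugation by the rotation subgroup `⟨ρ⟩`. -/
def rotOrbit {n : ℕ} [NeZero n] (ν : Equiv.Perm (ZMod n)) : Set (Equiv.Perm (ZMod n)) :=
  {σ | ∃ j : ℤ, σ = (rho n) ^ j * ν * ((rho n) ^ j)⁻¹}

/-- The number of orbits of the set of `n`-cycles under conjugation by `⟨ρ⟩`. -/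
noncomputable def T (n : ℕ) [NeZero n] : ℕ :=
  Nat.card {S : Set (Equiv.Perm (ZMod n)) | ∃ ν, IsNCycle ν ∧ S = rotOrbit ν}

/-!
Burnside's lemma for the rotation group `⟨ρ⟩ ≅ ℤ/n` acting by conjugation on the `(n-1)!`
`n`-cycles. The identity fixes all of them. A nontrivial rotation `x ↦ x + c` is itself an
`n`-cycle, so the permutations commuting with it are its powers `x ↦ x + d`; the `n - 1` with
`d ≠ 0` are exactly its fixed `n`-cycles. Hence `n · T n = (n-1)! + (n-1)²`, and reducing mod `n`,
where `(n-1)² ≡ 1`, gives Wilson's theorem.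
-/

open Equiv Equiv.Perm MulAction
open scoped Nat

theorem Equiv.Perm.mem_zpowers_of_commute_of_support_eq_univ {α : Type*} [Fintype α]
    [DecidableEq α] {g c : Perm α} (hc : c.IsCycle) (hsupp : c.support = Finset.univ)
    (h : Commute g c) : g ∈ Subgroup.zpowers c := by
  obtain ⟨_, hmem⟩ := hc.commute_iff.1 h
  rwa [ofSubtype_subtypePerm _ fun x _ => hsupp ▸ Finset.mem_univ x] at hmem

abbrev NCycles (n : ℕ) [NeZero n] : Type := {ν : Perm (ZMod n) // IsNCycle ν}

section

variable {n : ℕ} [NeZero n]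

theorem isNCycle_iff_cycleType_eq (σ : Perm (ZMod n)) : IsNCycle σ ↔ σ.cycleType = {n} := by
  constructor
  · rintro ⟨hcycle, hsupp⟩
    rw [hcycle.cycleType, hsupp, Finset.card_univ, ZMod.card]
  · intro h
    refine ⟨card_cycleType_eq_one.1 (by rw [h]; rfl), Finset.eq_univ_of_card _ ?_⟩
    simpa [h, ZMod.card] using (sum_cycleType σ).symm

theorem IsNCycle.conj {ν : Perm (ZMod n)} (hν : IsNCycle ν) (g : Perm (ZMod n)) :
    IsNCycle (g * ν * g⁻¹) :=
  ⟨hν.1.conj, by rw [support_conj, hν.2, Finset.map_univ_equiv]⟩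

theorem isNCycle_addRight (hn : 1 < n) (u : (ZMod n)ˣ) :
    IsNCycle (Equiv.addRight (u : ZMod n)) := by
  have : Fact (1 < n) := ⟨hn⟩
  have hmove : ∀ x : ZMod n, Equiv.addRight (u : ZMod n) x ≠ x := fun x h => by simp at h
  refine ⟨⟨0, hmove 0, fun y _ => ⟨((y * ↑u⁻¹ : ZMod n).val : ℤ), ?_⟩⟩,
    Finset.eq_univ_of_forall fun x => mem_support.2 (hmove x)⟩
  simp [mul_assoc]

theorem commute_addRight_iff (hn : 1 < n) (u : (ZMod n)ˣ) {ν : Perm (ZMod n)} :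
    Commute (Equiv.addRight (u : ZMod n)) ν ↔ ∃ d : ZMod n, ν = Equiv.addRight d := by
  refine ⟨fun h => ?_, ?_⟩
  · have hu := isNCycle_addRight hn u
    obtain ⟨m, rfl⟩ :=
      Subgroup.mem_zpowers_iff.1 (mem_zpowers_of_commute_of_support_eq_univ hu.1 hu.2 h.symm)
    exact ⟨m • (u : ZMod n), zsmul_addRight _ _⟩
  · rintro ⟨d, rfl⟩
    ext x
    simp only [Perm.mul_apply, coe_addRight]
    abel

theorem card_nCycles (hn : 2 ≤ n) : Nat.card (NCycles n) = (n - 1)! := by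
  classical
  have h := card_of_cycleType_singleton (α := ZMod n) hn (by rw [ZMod.card])
  rw [ZMod.card, Nat.choose_self, mul_one] at h
  rw [← h, Nat.card_eq_fintype_card, ← Fintype.card_coe]
  exact Fintype.card_congr <|
    Equiv.subtypeEquivRight fun σ => by simp [isNCycle_iff_cycleType_eq]

instance (H : Subgroup (Perm (ZMod n))) : MulAction H (NCycles n) where
  smul g ν := ⟨g * ν.1 * (g : Perm (ZMod n))⁻¹, ν.2.conj g⟩
  one_smul ν := Subtype.ext (by simp [HSMul.hSMul])
  mul_smul g h ν := Subtype.ext (by simp only [HSMul.hSMul, Subgroup.coe_mul]; group)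

theorem mem_fixedBy_nCycles_iff {H : Subgroup (Perm (ZMod n))} {g : H} {ν : NCycles n} :
    ν ∈ fixedBy (NCycles n) g ↔ Commute (g : Perm (ZMod n)) ν :=
  Subtype.ext_iff.trans mul_inv_eq_iff_eq_mul

theorem rho_zpow (j : ℤ) : rho n ^ j = Equiv.addRight (j : ZMod n) := by
  simp [rho]

theorem card_zpowers_rho (hn : 1 < n) : Nat.card (Subgroup.zpowers (rho n)) = n := by
  have hrho : IsNCycle (rho n) := by simpa [rho] using isNCycle_addRight hn 1
  rw [Nat.card_zpowers, hrho.1.orderOf, hrho.2, Finset.card_univ, ZMod.card]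

def addRightNCycle (hn : 1 < n) (u : (ZMod n)ˣ) : NCycles n :=
  ⟨Equiv.addRight (u : ZMod n), isNCycle_addRight hn u⟩

theorem addRightNCycle_injective (hn : 1 < n) : Function.Injective (addRightNCycle hn) :=
  fun u v h => Units.ext (by simpa [addRightNCycle] using congrArg (fun ν : NCycles n => ν.1 0) h)

theorem fixedBy_nCycles_eq_range (hp : n.Prime) {g : Subgroup.zpowers (rho n)} (hg : g ≠ 1) :
    fixedBy (NCycles n) g = Set.range (addRightNCycle hp.one_lt) := by
  have : Fact n.Prime := ⟨hp⟩
  obtain ⟨j, hj⟩ := Subgroup.mem_zpowers_iff.1 g.2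
  have hj0 : (j : ZMod n) ≠ 0 := fun h0 =>
    hg (Subtype.ext (by rw [← hj, rho_zpow, h0, addRight_zero, Subgroup.coe_one]))
  have hg_eq : (g : Perm (ZMod n)) = Equiv.addRight ((Units.mk0 _ hj0 : (ZMod n)ˣ) : ZMod n) := by
    rw [← hj, rho_zpow, Units.val_mk0]
  ext ν
  rw [mem_fixedBy_nCycles_iff, hg_eq, commute_addRight_iff hp.one_lt]
  constructor
  · rintro ⟨d, hd⟩
    have hd0 : d ≠ 0 := by
      rintro rfl
      exact ν.2.1.ne_one (by rw [hd, addRight_zero])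
    exact ⟨Units.mk0 d hd0, Subtype.ext hd.symm⟩
  · rintro ⟨u, rfl⟩
    exact ⟨u, rfl⟩

theorem card_fixedBy_nCycles_of_ne_one (hp : n.Prime) {g : Subgroup.zpowers (rho n)}
    (hg : g ≠ 1) : Nat.card (fixedBy (NCycles n) g) = n - 1 := by
  have : Fact n.Prime := ⟨hp⟩
  rw [fixedBy_nCycles_eq_range hp hg, Nat.card_range_of_injective (addRightNCycle_injective _),
    Nat.card_eq_fintype_card, ZMod.card_units]

theorem sum_card_fixedBy_nCycles (hp : n.Prime) :
    ∑ g : Subgroup.zpowers (rho n), Nat.card (fixedBy (NCycles n) g) =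
      (n - 1)! + (n - 1) ^ 2 := by
  rw [← Finset.add_sum_erase _ _ (Finset.mem_univ 1), fixedBy_one_eq_univ, Nat.card_univ,
    card_nCycles hp.two_le,
    Finset.sum_congr rfl fun g hg =>
      card_fixedBy_nCycles_of_ne_one hp (Finset.ne_of_mem_erase hg),
    Finset.sum_const, Finset.card_erase_of_mem (Finset.mem_univ _), Finset.card_univ,
    ← Nat.card_eq_fintype_card, card_zpowers_rho hp.one_lt, smul_eq_mul, sq]

theorem rotOrbit_eq_image_orbit (ν : NCycles n) :
    rotOrbit ν.1 = Subtype.val '' orbit (Subgroup.zpowers (rho n)) ν := by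
  ext σ
  constructor
  · rintro ⟨j, rfl⟩
    exact ⟨_, ⟨⟨rho n ^ j, j, rfl⟩, rfl⟩, rfl⟩
  · rintro ⟨_, ⟨⟨_, j, rfl⟩, rfl⟩, rfl⟩
    exact ⟨j, rfl⟩

theorem T_eq_card_orbitRel_quotient :
    T n = Nat.card (orbitRel.Quotient (Subgroup.zpowers (rho n)) (NCycles n)) := by
  let F (ν : NCycles n) : Set (Perm (ZMod n)) := rotOrbit ν.1
  have hrange : {S | ∃ ν, IsNCycle ν ∧ S = rotOrbit ν} = Set.range F := by
    ext S
    exact ⟨fun ⟨ν, hν, hS⟩ => ⟨⟨ν, hν⟩, hS.symm⟩,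
      fun ⟨ν, hS⟩ => ⟨ν.1, ν.2, hS.symm⟩⟩
  have hker : Setoid.ker F = orbitRel (Subgroup.zpowers (rho n)) _ := by
    ext a b
    rw [Setoid.ker_def, orbitRel_apply, ← orbit_eq_iff]
    simp only [F, rotOrbit_eq_image_orbit, (Set.image_injective.2 Subtype.val_injective).eq_iff]
  rw [T, hrange, ← Nat.card_congr (Setoid.quotientKerEquivRange F), hker]

end

theorem ZMod.natCast_eq_neg_one_of_dvd_add_pred_sq {n : ℕ} [NeZero n] {a : ℕ}
    (h : n ∣ a + (n - 1) ^ 2) : (a : ZMod n) = -1 := by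
  have h0 := (ZMod.natCast_eq_zero_iff _ _).2 h
  push_cast [Nat.cast_sub NeZero.one_le, ZMod.natCast_self] at h0
  linear_combination h0

theorem stmt_15 (n : ℕ) [NeZero n] (hp : n.Prime) :
    n ∣ (n - 1).factorial + (n - 1) ^ 2 ∧
      T n = ((n - 1).factorial + (n - 1) ^ 2) / n ∧
      (((n - 1).factorial : ZMod n) = -1) := by
  classical
  have hburnside : (n - 1)! + (n - 1) ^ 2 = T n * n := by
    have h := sum_card_fixedBy_eq_card_orbits_mul_card_group (Subgroup.zpowers (rho n))
      (NCycles n)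
    simp only [← Nat.card_eq_fintype_card] at h
    rwa [sum_card_fixedBy_nCycles hp, card_zpowers_rho hp.one_lt,
      ← T_eq_card_orbitRel_quotient] at h
  have hdvd : n ∣ (n - 1)! + (n - 1) ^ 2 := ⟨T n, by rw [hburnside, mul_comm]⟩
  exact ⟨hdvd, by rw [hburnside, Nat.mul_div_cancel _ hp.pos],
    ZMod.natCast_eq_neg_one_of_dvd_add_pred_sq hdvd⟩
end

section
/- Define Δ_n(k) := Σ_{r|n} μ(n/r)·(Σ_{j=0}^{r-1} k^j) for k ≥ 1, and N_{n,d} := Σ_{i=1}^{d} (-1)^{d-i} · C(n, d-i) · Δ_n(i). Then for every k ≥ 1 and n ≥ 2, Σ_{d=1}^{k} C(n+k-d-1, n-1) · N_{n,d} = Δ_n(k). -/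
/-!
Writing `c_j = (-1)^j C(n, j)` for the coefficients of `(1 - X)^n` and `C(n - 1 + j, n - 1)` for
those of `(1 - X)^{-n}`, `N_{n,·}` is the convolution of `Δ_n` with `c`, and the left-hand side
convolves it once more with `(1 - X)^{-n}`. Since `(1 - X)^n (1 - X)^{-n} = 1`, the two
convolutions cancel, for any sequence in place of `Δ_n`.
-/

open scoped ArithmeticFunction

/-- `Δ_n(k) = ∑_{r|n} μ(n/r) (∑_{j=0}^{r-1} k^j)`. -/
def Delta (n k : ℕ) : ℤ :=
  ∑ r ∈ n.divisors, (ArithmeticFunction.moebius (n / r)) *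
    (∑ j ∈ Finset.range r, (k : ℤ) ^ j)

/-- `N_{n,d} = ∑_{i=1}^{d} (-1)^{d-i} C(n, d-i) Δ_n(i)`. -/
def Ncyc (n d : ℕ) : ℤ :=
  ∑ i ∈ Finset.Icc 1 d, (-1 : ℤ) ^ (d - i) * (n.choose (d - i)) * Delta n i

open PowerSeries Finset
open scoped Polynomial

section
variable {R : Type*} [CommRing R]

theorem PowerSeries.coeff_one_sub_X_pow (n i : ℕ) :
    coeff i ((1 - X : R⟦X⟧) ^ n) = (-1) ^ i * n.choose i := by
  have h : (1 - X : R⟦X⟧) ^ n = rescale (-1) ((1 + Polynomial.X : R[X]) ^ n : R[X]) := by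
    simp [sub_eq_add_neg, rescale_X]
  rw [h, coeff_rescale, Polynomial.coeff_coe, Polynomial.coeff_one_add_X_pow]

theorem sum_range_neg_one_pow_mul_choose_mul_choose_add (m t : ℕ) :
    ∑ i ∈ range (t + 1), ((-1) ^ i * (m + 1).choose i * (m + (t - i)).choose m : R) =
      if t = 0 then 1 else 0 := by
  have h := congrArg (coeff t) (mk_add_choose_mul_one_sub_pow_eq_one (S := R) m)
  rw [mul_comm, coeff_mul, Nat.sum_antidiagonal_eq_sum_range_succ_mk, coeff_one] at h
  simpa only [coeff_one_sub_X_pow, coeff_mk] using h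

theorem sum_Icc_neg_one_pow_mul_choose_mul_choose {n i k : ℕ} (hn : 0 < n) (hik : i ≤ k) :
    ∑ d ∈ Icc i k, ((-1) ^ (d - i) * n.choose (d - i) * (n + k - d - 1).choose (n - 1) : R) =
      if i = k then 1 else 0 := by
  obtain ⟨m, rfl⟩ : ∃ m, n = m + 1 := ⟨n - 1, by omega⟩
  obtain ⟨t, rfl⟩ : ∃ t, k = i + t := ⟨k - i, by omega⟩
  simp only [left_eq_add]
  rw [← Ico_add_one_right_eq_Icc, sum_Ico_eq_sum_range, show i + t + 1 - i = t + 1 by omega,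
    ← sum_range_neg_one_pow_mul_choose_mul_choose_add m t]
  refine sum_congr rfl fun j hj => ?_
  rw [show m + 1 + (i + t) - (i + j) - 1 = m + (t - j) by grind, Nat.add_sub_cancel_left,
    Nat.add_sub_cancel]

theorem sum_Icc_choose_mul_sum_Icc_neg_one_pow_choose (f : ℕ → R) {n a k : ℕ} (hn : 0 < n)
    (hak : a ≤ k) :
    ∑ d ∈ Icc a k, ((n + k - d - 1).choose (n - 1) : R) *
      ∑ i ∈ Icc a d, (-1) ^ (d - i) * n.choose (d - i) * f i = f k := by
  simp_rw [mul_sum]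
  rw [sum_comm' (t' := Icc a k) (s' := fun i => Icc i k)
    (h := fun d i => by simp only [mem_Icc]; omega)]
  calc _ = ∑ i ∈ Icc a k, (∑ d ∈ Icc i k,
          ((-1) ^ (d - i) * n.choose (d - i) * (n + k - d - 1).choose (n - 1) : R)) * f i := by
        simp_rw [sum_mul]
        exact sum_congr rfl fun _ _ => sum_congr rfl fun _ _ => by ring
    _ = ∑ i ∈ Icc a k, if i = k then f i else 0 := by
        refine sum_congr rfl fun i hi => ?_
        rw [sum_Icc_neg_one_pow_mul_choose_mul_choose hn (mem_Icc.1 hi).2, ite_mul, one_mul,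
          zero_mul]
    _ = f k := by simp [hak]
end

theorem stmt_16 (n k : ℕ) (hn : 2 ≤ n) (hk : 1 ≤ k) :
    ∑ d ∈ Finset.Icc 1 k, ((n + k - d - 1).choose (n - 1) : ℤ) * Ncyc n d =
      Delta n k :=
  sum_Icc_choose_mul_sum_Icc_neg_one_pow_choose (Delta n) (by omega) hk
end
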